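/- Suppose (d^N) is a sequence of bidegree sequences with maximum degree O(S^{1/2-τ}) for some τ > 0, x is an arbitrary node and y is a node whose degree is bounded uniformly in N. Then, among graphs realizing the sequence, the ratio of the number of realizations in which x and y have no common out-neighbor to the number of realizations in which x and y have exactly one common out-neighbor is at least c·S^{2τ} for some constant c > 0 and all large S. Equivalently, the degree preserving switch map from graphs with one common out-neighbor to graphs with none is at most O(S^{1-2τ})-to-1 while admitting Ω(S) distinct switches per input graph. -/

import Mathlib

/-- In-degree of node `v` (edge `u → v` when `A u v = true`); loops allowed. -/
def inDeg {N : ℕ} (A : Fin N → Fin N → Bool) (v : Fin N) : ℕ :=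
  (Finset.univ.filter (fun u => A u v = true)).card

/-- Out-degree of node `v`. -/
def outDeg {N : ℕ} (A : Fin N → Fin N → Bool) (v : Fin N) : ℕ :=
  (Finset.univ.filter (fun u => A v u = true)).card

/-- `A` realizes the bidegree sequence `(a,b)`. -/
def Realizes {N : ℕ} (A : Fin N → Fin N → Bool) (a b : Fin N → ℕ) : Prop :=
  ∀ v, inDeg A v = a v ∧ outDeg A v = b v

/-!
Suppose `t` is the unique common out-neighbour of `x` and `y`. For all but `3D(D+1)` of the `S`
edges `u → v` (`D` the maximum degree), trading `x → t`, `u → v` for `u → t`, `x → v` preserves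
the bidegrees and leaves `x`, `y` without a common out-neighbour, and distinct edges give distinct
graphs. Conversely, the switch is undone by the switch of `u → t`, `x → v`, so a graph with no
common out-neighbour arises from at most `b_y · D²` switches: `t` must be an out-neighbour of `y`,
`u` an in-neighbour of `t` and `v` an out-neighbour of `x`. Double counting the switches between
the `N₁` realizations of the first kind and the `N₀` of the second gives
`N₁ · (S - 3D(D+1)) ≤ N₀ · b_y D²`, and `D = O(S^{1/2-τ})` makes `D² = O(S^{1-2τ})`.
-/

open Finset Filter

namespace DegreeSwitch

variable {n : ℕ}

def outNbrs (A : Fin n → Fin n → Bool) (u : Fin n) : Finset (Fin n) := {v | A u v = true}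

def inNbrs (A : Fin n → Fin n → Bool) (v : Fin n) : Finset (Fin n) := {u | A u v = true}

def edges (A : Fin n → Fin n → Bool) : Finset (Fin n × Fin n) := {e | A e.1 e.2 = true}

lemma card_outNbrs (A : Fin n → Fin n → Bool) (u : Fin n) : #(outNbrs A u) = outDeg A u := rfl

lemma card_inNbrs (A : Fin n → Fin n → Bool) (v : Fin n) : #(inNbrs A v) = inDeg A v := rfl

def switch (x t u v : Fin n) (A : Fin n → Fin n → Bool) : Fin n → Fin n → Bool := fun p q =>
  if p = x ∧ q = t then false
  else if p = u ∧ q = v then false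
  else if p = u ∧ q = t then true
  else if p = x ∧ q = v then true
  else A p q

structure IsSwitch (A : Fin n → Fin n → Bool) (x t u v : Fin n) : Prop where
  u_ne_x : u ≠ x
  v_ne_t : v ≠ t
  xt : A x t = true
  uv : A u v = true
  ut : A u t = false
  xv : A x v = false

variable {A : Fin n → Fin n → Bool} {x t u v : Fin n}

lemma switch_apply_of_ne {p q : Fin n} (h₁ : ¬(p = x ∧ q = t)) (h₂ : ¬(p = u ∧ q = v))
    (h₃ : ¬(p = u ∧ q = t)) (h₄ : ¬(p = x ∧ q = v)) : switch x t u v A p q = A p q := by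
  simp only [switch, if_neg h₁, if_neg h₂, if_neg h₃, if_neg h₄]

lemma switch_apply_of_row_ne {p : Fin n} (hpx : p ≠ x) (hpu : p ≠ u) (q : Fin n) :
    switch x t u v A p q = A p q :=
  switch_apply_of_ne (fun h => hpx h.1) (fun h => hpu h.1) (fun h => hpu h.1) fun h => hpx h.1

namespace IsSwitch

lemma switch_apply_row (h : IsSwitch A x t u v) {p : Fin n} (hp : p = x ∨ p = u) (q : Fin n) :
    switch x t u v A p q = A p (Equiv.swap t v q) := by
  obtain ⟨hux, hvt, hxt, huv, hut, hxv⟩ := h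
  have hxu := hux.symm
  have htv := hvt.symm
  rcases hp with rfl | rfl <;> by_cases hqt : q = t <;> by_cases hqv : q = v <;>
    simp_all [switch, Equiv.swap_apply_of_ne_of_ne]

lemma switch_apply_col (h : IsSwitch A x t u v) {q : Fin n} (hq : q = t ∨ q = v) (p : Fin n) :
    switch x t u v A p q = A (Equiv.swap x u p) q := by
  obtain ⟨hux, hvt, hxt, huv, hut, hxv⟩ := h
  have hxu := hux.symm
  have htv := hvt.symm
  rcases hq with rfl | rfl <;> by_cases hpx : p = x <;> by_cases hpu : p = u <;>
    simp_all [switch, Equiv.swap_apply_of_ne_of_ne]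

lemma switch_switch (h : IsSwitch A x t u v) : switch u t x v (switch x t u v A) = A := by
  obtain ⟨hux, hvt, hxt, huv, hut, hxv⟩ := h
  have hxu := hux.symm
  have htv := hvt.symm
  funext p q
  by_cases hpx : p = x <;> by_cases hpu : p = u <;> by_cases hqt : q = t <;>
    by_cases hqv : q = v <;> simp_all [switch]

lemma inDeg_switch (h : IsSwitch A x t u v) (w : Fin n) :
    inDeg (switch x t u v A) w = inDeg A w := by
  by_cases hw : w = t ∨ w = v
  · simp only [inDeg, card_filter, h.switch_apply_col hw]
    exact Equiv.sum_comp (Equiv.swap x u) fun p => if A p w = true then 1 else 0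
  · push Not at hw
    refine congrArg card (filter_congr fun p _ => ?_)
    rw [switch_apply_of_ne] <;> tauto

lemma outDeg_switch (h : IsSwitch A x t u v) (w : Fin n) :
    outDeg (switch x t u v A) w = outDeg A w := by
  by_cases hw : w = x ∨ w = u
  · simp only [outDeg, card_filter, h.switch_apply_row hw]
    exact Equiv.sum_comp (Equiv.swap t v) fun q => if A w q = true then 1 else 0
  · push Not at hw
    refine congrArg card (filter_congr fun q _ => ?_)
    rw [switch_apply_of_ne] <;> tauto

lemma realizes_switch {a b : Fin n → ℕ} (h : IsSwitch A x t u v) (hA : Realizes A a b) :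
    Realizes (switch x t u v A) a b := fun w =>
  ⟨(h.inDeg_switch w).trans (hA w).1, (h.outDeg_switch w).trans (hA w).2⟩

lemma switch_not_common {y : Fin n} (h : IsSwitch A x t u v) (hxy : x ≠ y) (huy : u ≠ y)
    (hyv : A y v = false) (hunique : ∀ s, A x s = true → A y s = true → s = t) (s : Fin n) :
    ¬(switch x t u v A x s = true ∧ switch x t u v A y s = true) := by
  rw [h.switch_apply_row (Or.inl rfl), switch_apply_of_row_ne hxy.symm huy.symm]
  rintro ⟨hxs, hys⟩
  by_cases hst : s = t
  · subst hst; simp [h.xv] at hxs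
  by_cases hsv : s = v
  · subst hsv; simp [hyv] at hys
  · rw [Equiv.swap_apply_of_ne_of_ne hst hsv] at hxs
    exact hst (hunique s hxs hys)

lemma eq_of_switch_eq {u' v' : Fin n} (h : IsSwitch A x t u v)
    (heq : switch x t u v A = switch x t u' v' A) : u = u' ∧ v = v' := by
  by_contra hne
  have h₁ : switch x t u v A u v = false := by
    rw [h.switch_apply_row (Or.inr rfl), Equiv.swap_apply_right, h.ut]
  have h₂ : switch x t u' v' A u v = true := by
    rw [switch_apply_of_ne (fun hp => h.u_ne_x hp.1) hne (fun hp => h.v_ne_t hp.2)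
      (fun hp => h.u_ne_x hp.1), h.uv]
  simp [heq, h₂] at h₁

end IsSwitch

lemma card_edges (A : Fin n → Fin n → Bool) : #(edges A) = ∑ v, inDeg A v := by
  rw [edges, card_filter, ← univ_product_univ, sum_product, sum_comm]
  simp only [inDeg, card_filter]

lemma card_filter_edges_fst_mem_le (A : Fin n → Fin n → Bool) (s : Finset (Fin n)) {D : ℕ}
    (hD : ∀ p ∈ s, outDeg A p ≤ D) : #{e ∈ edges A | e.1 ∈ s} ≤ D * #s := by
  refine card_le_mul_card_image_of_maps_to (fun e he => (mem_filter.1 he).2) D fun p hp => ?_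
  refine (card_le_card_of_injOn Prod.snd (t := outNbrs A p) (fun e he => ?_)
    fun e he e' he' h => ?_).trans (hD p hp)
  · simp only [coe_filter, edges, outNbrs, mem_filter, mem_univ, true_and] at he ⊢
    exact he.2 ▸ he.1.1
  · simp only [coe_filter, mem_filter] at he he'
    exact Prod.ext (he.2.trans he'.2.symm) h

lemma card_filter_edges_snd_mem_le (A : Fin n → Fin n → Bool) (s : Finset (Fin n)) {D : ℕ}
    (hD : ∀ q ∈ s, inDeg A q ≤ D) : #{e ∈ edges A | e.2 ∈ s} ≤ D * #s := by
  refine card_le_mul_card_image_of_maps_to (fun e he => (mem_filter.1 he).2) D fun q hq => ?_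
  refine (card_le_card_of_injOn Prod.fst (t := inNbrs A q) (fun e he => ?_)
    fun e he e' he' h => ?_).trans (hD q hq)
  · simp only [coe_filter, edges, inNbrs, mem_filter, mem_univ, true_and] at he ⊢
    exact he.2 ▸ he.1.1
  · simp only [coe_filter, mem_filter] at he he'
    exact Prod.ext h (he.2.trans he'.2.symm)

lemma card_le_card_filter_not_and_not_add {α : Type*} (E : Finset α) (P Q : α → Prop)
    [DecidablePred P] [DecidablePred Q] :
    #E ≤ #{e ∈ E | ¬P e ∧ ¬Q e} + #{e ∈ E | P e} + #{e ∈ E | Q e} := by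
  classical
  calc #E ≤ #({e ∈ E | ¬P e ∧ ¬Q e} ∪ {e ∈ E | P e} ∪ {e ∈ E | Q e}) :=
        card_le_card fun e he => by simp only [mem_union, mem_filter]; tauto
    _ ≤ _ := (card_union_le _ _).trans (Nat.add_le_add_right (card_union_le _ _) _)

def switchEdges (A : Fin n → Fin n → Bool) (x y t : Fin n) : Finset (Fin n × Fin n) :=
  {e ∈ edges A | e.1 ∉ insert x (insert y (inNbrs A t)) ∧
    e.2 ∉ insert t (outNbrs A x ∪ outNbrs A y)}

lemma isSwitch_of_mem_switchEdges {y : Fin n} {e : Fin n × Fin n} (hxt : A x t = true)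
    (he : e ∈ switchEdges A x y t) : IsSwitch A x t e.1 e.2 ∧ e.1 ≠ y ∧ A y e.2 = false := by
  simp only [switchEdges, edges, inNbrs, outNbrs, mem_filter, mem_insert, mem_union, mem_univ,
    true_and, not_or, Bool.not_eq_true] at he
  exact ⟨⟨he.2.1.1, he.2.2.1, hxt, he.1, he.2.1.2.2, he.2.2.2.1⟩, he.2.1.2.1, he.2.2.2.2⟩

lemma card_edges_le_card_switchEdges_add {D : ℕ} (y : Fin n) (ha : ∀ v, inDeg A v ≤ D)
    (hb : ∀ u, outDeg A u ≤ D) : #(edges A) ≤ #(switchEdges A x y t) + 3 * D * (D + 1) := by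
  have hs : #(insert x (insert y (inNbrs A t))) ≤ D + 2 :=
    (card_insert_le _ _).trans (by grw [card_insert_le, card_inNbrs, ha])
  have ht : #(insert t (outNbrs A x ∪ outNbrs A y)) ≤ 2 * D + 1 :=
    (card_insert_le _ _).trans (by grw [card_union_le, card_outNbrs, card_outNbrs, hb, hb]; omega)
  calc #(edges A)
      ≤ #(switchEdges A x y t) + #{e ∈ edges A | e.1 ∈ insert x (insert y (inNbrs A t))}
          + #{e ∈ edges A | e.2 ∈ insert t (outNbrs A x ∪ outNbrs A y)} :=
        card_le_card_filter_not_and_not_add _ _ _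
    _ ≤ #(switchEdges A x y t) + D * (D + 2) + D * (2 * D + 1) := by
        grw [card_filter_edges_fst_mem_le A _ fun p _ => hb p, hs,
          card_filter_edges_snd_mem_le A _ fun q _ => ha q, ht]
    _ = #(switchEdges A x y t) + 3 * D * (D + 1) := by ring

def SwitchesTo (x y : Fin n) (A A' : Fin n → Fin n → Bool) : Prop :=
  ∃ t u v, IsSwitch A x t u v ∧ switch x t u v A = A' ∧ A' y t = true

lemma switch_injOn (y : Fin n) (hxt : A x t = true) :
    Set.InjOn (fun e : Fin n × Fin n => switch x t e.1 e.2 A) (switchEdges A x y t) :=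
  fun _ he _ _ heq => Prod.ext_iff.2 ((isSwitch_of_mem_switchEdges hxt he).1.eq_of_switch_eq heq)

lemma realizes_switch_of_mem_switchEdges {a b : Fin n → ℕ} {y : Fin n} {e : Fin n × Fin n}
    (hxy : x ≠ y) (hA : Realizes A a b) (hxt : A x t = true) (hyt : A y t = true)
    (hunique : ∀ s, A x s = true → A y s = true → s = t) (he : e ∈ switchEdges A x y t) :
    Realizes (switch x t e.1 e.2 A) a b ∧
      (∀ s, ¬(switch x t e.1 e.2 A x s = true ∧ switch x t e.1 e.2 A y s = true)) ∧
      SwitchesTo x y A (switch x t e.1 e.2 A) := by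
  obtain ⟨h, huy, hyv⟩ := isSwitch_of_mem_switchEdges hxt he
  refine ⟨h.realizes_switch hA, h.switch_not_common hxy huy hyv hunique, t, e.1, e.2, h, rfl, ?_⟩
  rwa [switch_apply_of_row_ne hxy.symm huy.symm]

lemma card_filter_switchesTo_le (x y : Fin n) (G : Finset (Fin n → Fin n → Bool))
    (A' : Fin n → Fin n → Bool) [DecidablePred fun A => SwitchesTo x y A A'] :
    #{A ∈ G | SwitchesTo x y A A'} ≤ #((outNbrs A' y).sigma (inNbrs A') ×ˢ outNbrs A' x) := by
  refine (card_le_card fun A hA => ?_).trans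
    (card_image_le (f := fun p => switch p.1.2 p.1.1 x p.2 A'))
  obtain ⟨-, t, u, v, h, rfl, hyt⟩ := mem_filter.1 hA
  refine mem_image.2 ⟨⟨⟨t, u⟩, v⟩, ?_, h.switch_switch⟩
  simp only [mem_product, mem_sigma, outNbrs, inNbrs, mem_filter, mem_univ,
    h.switch_apply_row (Or.inr rfl), h.switch_apply_row (Or.inl rfl), Equiv.swap_apply_left,
    Equiv.swap_apply_right, h.uv, h.xt, hyt, and_self]

theorem card_mul_le_card_mul_of_degree_le {a b : Fin n → ℕ} {x y : Fin n} {D : ℕ} (hxy : x ≠ y)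
    (ha : ∀ i, a i ≤ D) (hb : ∀ i, b i ≤ D) :
    Nat.card {A : Fin n → Fin n → Bool //
        Realizes A a b ∧ ∃! t, A x t = true ∧ A y t = true} * (∑ i, a i - 3 * D * (D + 1))
      ≤ Nat.card {A : Fin n → Fin n → Bool //
        Realizes A a b ∧ ∀ t, ¬(A x t = true ∧ A y t = true)} * (b y * D * D) := by
  classical
  simp only [Nat.card_eq_fintype_card, Fintype.card_subtype]
  refine card_mul_le_card_mul (SwitchesTo x y) (fun A hA => ?_) fun A' hA' => ?_
  · obtain ⟨hA, t, ⟨hxt, hyt⟩, hunique⟩ := (mem_filter.1 hA).2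
    have hedges := card_edges_le_card_switchEdges_add (x := x) (t := t) y
      (fun v => (hA v).1 ▸ ha v) (fun u => (hA u).2 ▸ hb u)
    have hS : #(edges A) = ∑ i, a i := (card_edges A).trans (sum_congr rfl fun v _ => (hA v).1)
    calc ∑ i, a i - 3 * D * (D + 1) ≤ #(switchEdges A x y t) := by omega
      _ = #((switchEdges A x y t).image fun e => switch x t e.1 e.2 A) :=
        (card_image_of_injOn (switch_injOn y hxt)).symm
      _ ≤ _ := card_le_card <| image_subset_iff.2 fun e he => by
        obtain ⟨hA', hnone, hto⟩ := realizes_switch_of_mem_switchEdges hxy hA hxt hyt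
          (fun s hxs hys => hunique s ⟨hxs, hys⟩) he
        simp only [bipartiteAbove, mem_filter, mem_univ, true_and]
        exact ⟨⟨hA', hnone⟩, hto⟩
  · have hA' := (mem_filter.1 hA').2.1
    refine (card_filter_switchesTo_le x y _ A').trans ?_
    rw [card_product, card_sigma, card_outNbrs, (hA' x).2]
    refine Nat.mul_le_mul ?_ (hb x)
    calc ∑ t ∈ outNbrs A' y, #(inNbrs A' t) ≤ #(outNbrs A' y) • D :=
          sum_le_card_nsmul _ _ D fun t _ => (card_inNbrs A' t).trans (hA' t).1 ▸ ha t
      _ = b y * D := by rw [smul_eq_mul, card_outNbrs, (hA' y).2]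

end DegreeSwitch

lemma eventually_mul_rpow_le (K : ℝ) {e ε : ℝ} (he : e < 1) (hε : 0 < ε) :
    ∀ᶠ s : ℝ in atTop, K * s ^ e ≤ ε * s := by
  filter_upwards [(tendsto_rpow_atTop (sub_pos.2 he)).eventually_ge_atTop (K / ε),
    eventually_gt_atTop 0] with s hs hs₀
  calc K * s ^ e ≤ ε * s ^ (1 - e) * s ^ e := by
        gcongr; exact (div_le_iff₀' hε).1 hs
    _ = ε * s := by rw [mul_assoc, ← Real.rpow_add hs₀, sub_add_cancel, Real.rpow_one]

lemma natFloor_mul_self_le {C s τ : ℝ} (hC : 0 ≤ C) (hs : 0 < s) :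
    (⌊C * s ^ ((1 : ℝ) / 2 - τ)⌋₊ : ℝ) * ⌊C * s ^ ((1 : ℝ) / 2 - τ)⌋₊
      ≤ C ^ 2 * s ^ (1 - 2 * τ) := by
  have hD := Nat.floor_le (mul_nonneg hC (Real.rpow_nonneg hs.le ((1 : ℝ) / 2 - τ)))
  calc _ ≤ (C * s ^ ((1 : ℝ) / 2 - τ)) * (C * s ^ ((1 : ℝ) / 2 - τ)) :=
        mul_le_mul hD hD (Nat.cast_nonneg _) (hD.trans' (Nat.cast_nonneg _))
    _ = C ^ 2 * s ^ (1 - 2 * τ) := by rw [mul_mul_mul_comm, ← Real.rpow_add hs]; ring_nf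

lemma mul_rpow_le_of_mul_le {s τ C B n₀ n₁ : ℝ} (hs : 0 < s) (hC : 0 < C) (hB : 0 ≤ B)
    (hn₀ : 0 ≤ n₀) (h : n₁ * (s / 2) ≤ n₀ * (B * (C ^ 2 * s ^ (1 - 2 * τ)))) :
    1 / (2 * (B + 1) * C ^ 2) * s ^ (2 * τ) * n₁ ≤ n₀ := by
  have hsplit : s = s ^ (2 * τ) * s ^ (1 - 2 * τ) := by
    rw [← Real.rpow_add hs, add_sub_cancel, Real.rpow_one]
  have hr : 0 < s ^ (1 - 2 * τ) := Real.rpow_pos_of_pos hs _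
  have h' : n₁ * s ^ (2 * τ) ≤ 2 * B * C ^ 2 * n₀ := by
    conv_lhs at h => rw [hsplit]
    refine le_of_mul_le_mul_right ?_ hr
    linarith
  rw [div_mul_eq_mul_div, div_mul_eq_mul_div, div_le_iff₀ (by positivity)]
  nlinarith [mul_nonneg hn₀ (sq_nonneg C)]

/-- Theorem 2 (degree preserving switches): for a sequence of bidegree
sequences with maximum degree `O(S^{1/2-τ})` and `S → ∞`, a node `x` and a
node `y` of uniformly bounded degree, the number of realizations in which
`x` and `y` have no common out-neighbor is at least `c·S^{2τ}` times the
number of realizations in which they have exactly one common out-neighbor,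
for some `c > 0` and all sufficiently large indices. -/
theorem stmt_14 (τ C B : ℝ) (hτ : 0 < τ) (hC : 0 < C)
    (N : ℕ → ℕ) (a b : ∀ m, Fin (N m) → ℕ) (x y : ∀ m, Fin (N m))
    (S : ℕ → ℕ) (hS : ∀ m, S m = ∑ i, a m i)
    (hmax : ∀ m i, (a m i : ℝ) ≤ C * (S m : ℝ) ^ ((1 : ℝ) / 2 - τ) ∧
                   (b m i : ℝ) ≤ C * (S m : ℝ) ^ ((1 : ℝ) / 2 - τ))
    (hy : ∀ m, (a m (y m) : ℝ) ≤ B ∧ (b m (y m) : ℝ) ≤ B)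
    (hxy : ∀ m, x m ≠ y m)
    (hSinf : Filter.Tendsto S Filter.atTop Filter.atTop) :
    ∃ c > 0, ∀ᶠ m in Filter.atTop,
      c * (S m : ℝ) ^ (2 * τ) *
          (Nat.card {A : Fin (N m) → Fin (N m) → Bool //
            Realizes A (a m) (b m) ∧
            ∃! t, A (x m) t = true ∧ A (y m) t = true} : ℝ)
        ≤ (Nat.card {A : Fin (N m) → Fin (N m) → Bool //
            Realizes A (a m) (b m) ∧
            ∀ t, ¬(A (x m) t = true ∧ A (y m) t = true)} : ℝ) := by
  have hB : 0 ≤ B := (Nat.cast_nonneg _).trans (hy 0).2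
  refine ⟨1 / (2 * (B + 1) * C ^ 2), by positivity, ?_⟩
  have hS' := (tendsto_natCast_atTop_atTop (R := ℝ)).comp hSinf
  filter_upwards [hS'.eventually (eventually_mul_rpow_le (3 * C ^ 2) (e := 1 - 2 * τ)
      (by linarith) (by norm_num : (0 : ℝ) < 1 / 4)),
    hS'.eventually (eventually_mul_rpow_le (3 * C) (e := 1 / 2 - τ)
      (by linarith) (by norm_num : (0 : ℝ) < 1 / 4)),
    hS'.eventually_gt_atTop 0] with m h₁ h₂ hs
  simp only [Function.comp_apply] at h₁ h₂ hs
  set s := (S m : ℝ)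
  set D := ⌊C * s ^ ((1 : ℝ) / 2 - τ)⌋₊
  have hD : (D : ℝ) ≤ C * s ^ ((1 : ℝ) / 2 - τ) := Nat.floor_le (by positivity)
  have hD₂ : (D : ℝ) * D ≤ C ^ 2 * s ^ (1 - 2 * τ) := natFloor_mul_self_le hC.le hs
  have hbad : ((3 * D * (D + 1) : ℕ) : ℝ) ≤ s / 2 := by push_cast; nlinarith
  have key := DegreeSwitch.card_mul_le_card_mul_of_degree_le (D := D) (hxy m)
    (fun i => Nat.le_floor (hmax m i).1) (fun i => Nat.le_floor (hmax m i).2)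
  have hle : 3 * D * (D + 1) ≤ S m := Nat.cast_le.1 (hbad.trans (half_le_self hs.le))
  rw [← hS m, ← Nat.cast_le (α := ℝ), Nat.cast_mul, Nat.cast_mul, Nat.cast_sub hle] at key
  refine mul_rpow_le_of_mul_le hs hC hB (Nat.cast_nonneg _) (key.trans' ?_ |>.trans ?_)
  · gcongr; linarith
  · gcongr
    push_cast
    rw [mul_assoc]
    exact mul_le_mul (hy m).2 hD₂ (by positivity) hB
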